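/- arXiv:1506.07377 — 3 statements merged into one kernel-verified Lean document; each statement's English description precedes it below -/
import Mathlib

section
/- Let k be a field of characteristic different from two, V a finite-dimensional k-vector space, φ a non-degenerate quadratic form on V, and a ∈ k nonzero. Let ⟨a⟩ denote the quadratic form x ↦ a·x² on k, and let ℍ denote the hyperbolic plane, i.e. the quadratic form (x, y) ↦ x·y on k². If the orthogonal sum φ ⊥ ⟨a⟩ (the quadratic form on V × k) is equivalent (isometric) to ψ ⊥ ℍ ⊥ ℍ for some quadratic form ψ on a finite-dimensional k-vector space W, then φ is isotropic: there exists v ∈ V with v ≠ 0 and φ(v) = 0. -/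
open QuadraticMap

/-- If `φ` is a non-degenerate quadratic form over a field `k` of characteristic `≠ 2`,
`a ≠ 0`, and `φ ⊥ ⟨a⟩` is equivalent to `ψ ⊥ ℍ ⊥ ℍ`, then `φ` is isotropic. -/
theorem stmt_4 (k : Type*) [Field k] (h2 : (2 : k) ≠ 0)
    (V : Type*) [AddCommGroup V] [Module k V] [FiniteDimensional k V]
    (φ : QuadraticForm k V)
    (hφ : LinearMap.BilinForm.Nondegenerate (QuadraticMap.polarBilin φ))
    (a : k) (ha : a ≠ 0)
    (W : Type*) [AddCommGroup W] [Module k W] [FiniteDimensional k W]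
    (ψ : QuadraticForm k W)
    (heq : (φ.prod (a • (QuadraticMap.sq : QuadraticForm k k))).Equivalent
        (ψ.prod
          ((QuadraticMap.linMulLin (LinearMap.fst k k k) (LinearMap.snd k k k)).prod
           (QuadraticMap.linMulLin (LinearMap.fst k k k) (LinearMap.snd k k k))))) :
    ∃ v : V, v ≠ 0 ∧ φ v = 0 := by
  obtain ⟨f⟩ := heq
  set g := f.symm with hg
  -- the element of the target space with given hyperbolic coordinates
  set e : k → k → W × (k × k) × (k × k) := fun x y => (0, ((x, 0), (y, 0))) with he
  set u : k → k → V × k := fun x y => g (e x y) with hu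
  have hlin : ∀ x y : k, e x y = x • e 1 0 + y • e 0 1 := by
    intro x y
    simp [he, Prod.ext_iff, mul_comm]
  have hQu : ∀ x y : k, (φ.prod (a • (QuadraticMap.sq : QuadraticForm k k))) (u x y) = 0 := by
    intro x y
    rw [hu]
    rw [g.map_app]
    simp [he, prod_apply]
  have hune : ∀ x y : k, (x, y) ≠ (0, 0) → u x y ≠ 0 := by
    intro x y hxy h0
    have : e x y = 0 := by
      have := congrArg g.symm h0
      simpa [hu] using this
    simp [he, Prod.ext_iff] at this
    exact hxy (by simp [Prod.ext_iff, this.1, this.2])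
  have hsnd : ∀ x y : k, (u x y).2 = x * (u 1 0).2 + y * (u 0 1).2 := by
    intro x y
    show (g (e x y)).2 = x * (g (e 1 0)).2 + y * (g (e 0 1)).2
    rw [hlin x y, map_add, _root_.map_smul, _root_.map_smul]
    simp [smul_eq_mul]
  set t1 := (u 1 0).2
  set t2 := (u 0 1).2
  -- choose (x, y) ≠ 0 with x*t1 + y*t2 = 0
  obtain ⟨x, y, hxy, hz⟩ : ∃ x y : k, (x, y) ≠ (0, 0) ∧ x * t1 + y * t2 = 0 := by
    by_cases h : t1 = 0
    · exact ⟨1, 0, by simp, by simp [h]⟩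
    · exact ⟨t2, -t1, by simp [Prod.ext_iff, h], by ring⟩
  refine ⟨(u x y).1, ?_, ?_⟩
  · intro h0
    apply hune x y hxy
    have h2' : (u x y).2 = 0 := by rw [hsnd]; exact hz
    exact Prod.ext h0 h2'
  · have := hQu x y
    have h2' : (u x y).2 = 0 := by rw [hsnd]; exact hz
    rw [prod_apply] at this
    simpa [h2'] using this
end

section
/- Let F : 𝒞 → 𝒟 be a triangulated functor between pretriangulated categories, each equipped with a weight structure, and assume that the weight structure on 𝒞 is bounded. Then F is w-exact if and only if F maps the heart into the heart, i.e. F(𝒞^{w=0}) ⊆ 𝒟^{w=0}. -/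
open CategoryTheory Category Limits Pretriangulated

/-- A weight structure on a pretriangulated category: two classes of objects `le`
(the class `𝒞^{w≤0}`) and `ge` (the class `𝒞^{w≥0}`), each containing the zero objects
and closed under isomorphisms, finite direct sums and retracts, satisfying the shift,
orthogonality and weight decomposition axioms. -/
structure WeightStructure (C : Type*) [Category C] [HasZeroObject C] [HasShift C ℤ]
    [Preadditive C] [∀ n : ℤ, (CategoryTheory.shiftFunctor C n).Additive]
    [Pretriangulated C] [HasBinaryBiproducts C] where
  le : C → Prop
  ge : C → Prop
  le_of_isZero : ∀ X : C, IsZero X → le X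
  ge_of_isZero : ∀ X : C, IsZero X → ge X
  le_of_iso : ∀ {X Y : C}, (X ≅ Y) → le X → le Y
  ge_of_iso : ∀ {X Y : C}, (X ≅ Y) → ge X → ge Y
  le_biprod : ∀ X Y : C, le X → le Y → le (X ⊞ Y)
  ge_biprod : ∀ X Y : C, ge X → ge Y → ge (X ⊞ Y)
  le_retract : ∀ (X Y : C) (i : X ⟶ Y) (p : Y ⟶ X), i ≫ p = 𝟙 X → le Y → le X
  ge_retract : ∀ (X Y : C) (i : X ⟶ Y) (p : Y ⟶ X), i ≫ p = 𝟙 X → ge Y → ge X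
  ge_shift : ∀ X : C, ge X → ge (X⟦(-1 : ℤ)⟧)
  le_shift : ∀ X : C, le X → le (X⟦(1 : ℤ)⟧)
  orth : ∀ {X Y : C}, ge X → le Y → ∀ f : X ⟶ Y⟦(1 : ℤ)⟧, f = 0
  decomp : ∀ X : C, ∃ (A B : C) (f : B ⟶ X) (g : X ⟶ A) (h : A ⟶ B⟦(1 : ℤ)⟧),
    ge (B⟦(1 : ℤ)⟧) ∧ le A ∧ Triangle.mk f g h ∈ distTriang C

variable {C : Type*} [Category C] [HasZeroObject C] [HasShift C ℤ]
  [Preadditive C] [∀ n : ℤ, (CategoryTheory.shiftFunctor C n).Additive]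
  [Pretriangulated C] [HasBinaryBiproducts C]

/-- `X ∈ 𝒞^{w≤n}`, i.e. `X⟦n⟧ ∈ 𝒞^{w≤0}`. -/
def WeightStructure.leN (w : WeightStructure C) (n : ℤ) (X : C) : Prop := w.le (X⟦n⟧)

/-- `X ∈ 𝒞^{w≥n}`, i.e. `X⟦n⟧ ∈ 𝒞^{w≥0}`. -/
def WeightStructure.geN (w : WeightStructure C) (n : ℤ) (X : C) : Prop := w.ge (X⟦n⟧)

/-- The heart `𝒞^{w=0} = 𝒞^{w≥0} ∩ 𝒞^{w≤0}`. -/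
def WeightStructure.heart (w : WeightStructure C) (X : C) : Prop := w.ge X ∧ w.le X

/-- A weight structure is bounded if every object lies in some `𝒞^{w≥n}` and some
`𝒞^{w≤m}`. -/
def WeightStructure.Bounded (w : WeightStructure C) : Prop :=
  ∀ X : C, ∃ n m : ℤ, w.geN n X ∧ w.leN m X

/-!
Induction on the length of the weight range. If `X` has weights in `[-k, 0]`, the weight
decomposition `B → X → A → B⟦1⟧` with `B ∈ 𝒞^{w≥0}` and `A ∈ 𝒞^{w≤-1}` has `B` in the heart,
as `𝒞^{w≤0}` is closed under extensions, and `A⟦-1⟧` has weights in `[-k+1, 0]`. Hence, by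
boundedness, every class of objects that contains the heart and is closed under isomorphisms,
extensions and `⟦1⟧` contains `𝒞^{w≤0}`. Since `F` is triangulated, the objects that `F` sends
into `𝒟^{w≤0}` form such a class. Dually for `𝒞^{w≥0}` and `⟦-1⟧`.
-/

lemma Pretriangulated.mk_comp_iso_mem_distTriang {D : Type*} [Category D] [HasZeroObject D]
    [HasShift D ℤ] [Preadditive D] [∀ n : ℤ, (shiftFunctor D n).Additive] [Pretriangulated D]
    {T : Triangle D} (hT : T ∈ distTriang D) {X : D} (e : T.obj₂ ≅ X) :
    Triangle.mk (T.mor₁ ≫ e.hom) (e.inv ≫ T.mor₂) T.mor₃ ∈ distTriang D :=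
  isomorphic_distinguished _ hT _
    (Triangle.isoMk _ _ (Iso.refl _) e.symm (Iso.refl _)
      (by simp [Triangle.mk]) (by simp [Triangle.mk]) (by simp [Triangle.mk]))

namespace WeightStructure

variable (w : WeightStructure C)

lemma leN_zero_iff {X : C} : w.leN 0 X ↔ w.le X :=
  ⟨w.le_of_iso ((shiftFunctorZero C ℤ).app X), w.le_of_iso ((shiftFunctorZero C ℤ).symm.app X)⟩

lemma geN_zero_iff {X : C} : w.geN 0 X ↔ w.ge X :=
  ⟨w.ge_of_iso ((shiftFunctorZero C ℤ).app X), w.ge_of_iso ((shiftFunctorZero C ℤ).symm.app X)⟩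

lemma leN_shift_iff {X : C} {a n m : ℤ} (h : a + n = m) : w.leN n (X⟦a⟧) ↔ w.leN m X :=
  ⟨w.le_of_iso ((shiftFunctorAdd' C a n m h).symm.app X),
    w.le_of_iso ((shiftFunctorAdd' C a n m h).app X)⟩

lemma geN_shift_iff {X : C} {a n m : ℤ} (h : a + n = m) : w.geN n (X⟦a⟧) ↔ w.geN m X :=
  ⟨w.ge_of_iso ((shiftFunctorAdd' C a n m h).symm.app X),
    w.ge_of_iso ((shiftFunctorAdd' C a n m h).app X)⟩

lemma leN_mono {X : C} {m n : ℤ} (hmn : m ≤ n) (h : w.leN m X) : w.leN n X := by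
  induction n, hmn using Int.leInduction with
  | base => exact h
  | succ n _ ih => exact (w.leN_shift_iff rfl).1 (w.le_shift _ ih)

lemma geN_mono {X : C} {m n : ℤ} (hmn : m ≤ n) (h : w.geN n X) : w.geN m X := by
  induction m, hmn using Int.leInductionDown with
  | base => exact h
  | pred m _ ih => exact (w.geN_shift_iff (by ring)).1 (w.ge_shift _ ih)

lemma leN_of_retract {X Y : C} {n : ℤ} (i : X ⟶ Y) (p : Y ⟶ X) (hip : i ≫ p = 𝟙 X)
    (hY : w.leN n Y) : w.leN n X :=
  w.le_retract _ _ (i⟦n⟧') (p⟦n⟧') (by simp [← Functor.map_comp, hip]) hY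

lemma geN_of_retract {X Y : C} {n : ℤ} (i : X ⟶ Y) (p : Y ⟶ X) (hip : i ≫ p = 𝟙 X)
    (hY : w.geN n Y) : w.geN n X :=
  w.ge_retract _ _ (i⟦n⟧') (p⟦n⟧') (by simp [← Functor.map_comp, hip]) hY

lemma hom_eq_zero_of_geN_of_leN {X Y : C} {m n : ℤ} (hmn : m < n) (hX : w.geN n X)
    (hY : w.leN m Y) (f : X ⟶ Y) : f = 0 := by
  -- `Y⟦n⟧` has weights `≤ m - n ≤ -1`, so it is `Z⟦1⟧` with `Z := Y⟦n⟧⟦-1⟧` of weights `≤ 0`.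
  have hZ : w.le (Y⟦n⟧⟦(-1 : ℤ)⟧) :=
    (w.leN_shift_iff rfl).2 (w.leN_mono (by omega) hY)
  let e : Y⟦n⟧ ≅ Y⟦n⟧⟦(-1 : ℤ)⟧⟦(1 : ℤ)⟧ :=
    ((shiftFunctorCompIsoId C (-1) 1 (by norm_num)).app _).symm
  have hf : f⟦n⟧' ≫ e.hom = 0 := w.orth hX hZ _
  exact (shiftFunctor C n).map_injective (by simpa using hf)

lemma exists_distTriang_geN_leN {m n : ℤ} (hmn : m + 1 = n) (X : C) :
    ∃ (A B : C) (f : B ⟶ X) (g : X ⟶ A) (h : A ⟶ B⟦(1 : ℤ)⟧),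
      w.geN n B ∧ w.leN m A ∧ Triangle.mk f g h ∈ distTriang C := by
  obtain ⟨A, B, f, g, h, hB, hA, hT⟩ := w.decomp (X⟦m⟧)
  let e : X⟦m⟧⟦-m⟧ ≅ X := (shiftFunctorCompIsoId C m (-m) (by ring)).app X
  exact ⟨A⟦-m⟧, B⟦-m⟧, _, _, _, (w.geN_shift_iff (by omega)).2 hB,
    (w.leN_shift_iff (neg_add_cancel m)).2 (w.leN_zero_iff.2 hA),
    Pretriangulated.mk_comp_iso_mem_distTriang (Triangle.shift_distinguished _ hT (-m)) e⟩

lemma leN_of_distTriang {T : Triangle C} (hT : T ∈ distTriang C) {n : ℤ}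
    (h₁ : w.leN n T.obj₁) (h₃ : w.leN n T.obj₃) : w.leN n T.obj₂ := by
  obtain ⟨A, B, f, g, _, hB, hA, hD⟩ := w.exists_distTriang_geN_leN rfl T.obj₂
  have hBX (Y : C) (hY : w.leN n Y) (u : B ⟶ Y) : u = 0 :=
    w.hom_eq_zero_of_geN_of_leN (lt_add_one n) hB hY u
  obtain ⟨u, hu⟩ := Triangle.coyoneda_exact₂ T hT f (hBX _ h₃ _)
  have hf : f = 0 := by rw [hu, hBX _ h₁ u, zero_comp]
  obtain ⟨r, hr⟩ := Triangle.yoneda_exact₂ _ hD (𝟙 T.obj₂) (show f ≫ _ = 0 by simp [hf])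
  exact w.leN_of_retract g r hr.symm hA

lemma geN_of_distTriang {T : Triangle C} (hT : T ∈ distTriang C) {n : ℤ}
    (h₁ : w.geN n T.obj₁) (h₃ : w.geN n T.obj₃) : w.geN n T.obj₂ := by
  obtain ⟨A, B, f, g, _, hB, hA, hD⟩ := w.exists_distTriang_geN_leN (sub_add_cancel n 1) T.obj₂
  have hXA (Y : C) (hY : w.geN n Y) (u : Y ⟶ A) : u = 0 :=
    w.hom_eq_zero_of_geN_of_leN (sub_one_lt n) hY hA u
  obtain ⟨u, hu⟩ := Triangle.yoneda_exact₂ T hT g (hXA _ h₁ _)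
  have hg : g = 0 := by rw [hu, hXA _ h₃ u, comp_zero]
  obtain ⟨s, hs⟩ := Triangle.coyoneda_exact₂ _ hD (𝟙 T.obj₂) (show _ ≫ g = 0 by simp [hg])
  exact w.geN_of_retract s f hs.symm hB

lemma le_of_distTriang {T : Triangle C} (hT : T ∈ distTriang C)
    (h₁ : w.le T.obj₁) (h₃ : w.le T.obj₃) : w.le T.obj₂ :=
  w.leN_zero_iff.1 (w.leN_of_distTriang hT (w.leN_zero_iff.2 h₁) (w.leN_zero_iff.2 h₃))

lemma ge_of_distTriang {T : Triangle C} (hT : T ∈ distTriang C)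
    (h₁ : w.ge T.obj₁) (h₃ : w.ge T.obj₃) : w.ge T.obj₂ :=
  w.geN_zero_iff.1 (w.geN_of_distTriang hT (w.geN_zero_iff.2 h₁) (w.geN_zero_iff.2 h₃))

section Induction

variable {P : C → Prop} (hiso : ∀ {X Y : C}, (X ≅ Y) → P X → P Y)
  (hext : ∀ T ∈ distTriang C, P T.obj₁ → P T.obj₃ → P T.obj₂)
  (hheart : ∀ X, w.heart X → P X)
include hiso hext hheart

lemma le_induction (hshift : ∀ X, P X → P (X⟦(1 : ℤ)⟧)) (k : ℕ) {X : C}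
    (hle : w.le X) (hge : w.geN (-k) X) : P X := by
  induction k generalizing X with
  | zero => exact hheart X ⟨w.geN_zero_iff.1 (by simpa using hge), hle⟩
  | succ k ih =>
    obtain ⟨A, B, _, _, _, hB, hA, hT⟩ :=
      w.exists_distTriang_geN_leN (m := -1) (n := 0) (by norm_num) X
    have hBheart : w.heart B :=
      ⟨w.geN_zero_iff.1 hB, w.le_of_distTriang (inv_rot_of_distTriang _ hT) hA hle⟩
    have hBge : w.geN (-(k + 1 : ℕ)) (B⟦(1 : ℤ)⟧) :=
      (w.geN_shift_iff rfl).2 (w.geN_mono (by omega) hB)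
    have hAge : w.geN (-k) (A⟦(-1 : ℤ)⟧) :=
      (w.geN_shift_iff (by push_cast; ring)).2
        (w.geN_of_distTriang (rot_of_distTriang _ hT) hge hBge)
    have hPA : P A :=
      hiso ((shiftFunctorCompIsoId C (-1) 1 (by norm_num)).app A) (hshift _ (ih hA hAge))
    exact hext _ hT (hheart B hBheart) hPA

lemma ge_induction (hshift : ∀ X, P X → P (X⟦(-1 : ℤ)⟧)) (k : ℕ) {X : C}
    (hge : w.ge X) (hle : w.leN k X) : P X := by
  induction k generalizing X with
  | zero => exact hheart X ⟨hge, w.leN_zero_iff.1 (by simpa using hle)⟩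
  | succ k ih =>
    obtain ⟨A, B, _, _, _, hB, hA, hT⟩ :=
      w.exists_distTriang_geN_leN (m := 0) (n := 1) (by norm_num) X
    have hAheart : w.heart A :=
      ⟨w.ge_of_distTriang (rot_of_distTriang _ hT) hge hB, w.leN_zero_iff.1 hA⟩
    have hAle : w.leN (k + 1 : ℕ) (A⟦(-1 : ℤ)⟧) :=
      (w.leN_shift_iff rfl).2 (w.leN_mono (by omega) hA)
    have hBle : w.leN k (B⟦(1 : ℤ)⟧) :=
      (w.leN_shift_iff (by push_cast; ring)).2
        (w.leN_of_distTriang (inv_rot_of_distTriang _ hT) hAle hle)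
    have hPB : P B :=
      hiso ((shiftFunctorCompIsoId C 1 (-1) (by norm_num)).app B) (hshift _ (ih hB hBle))
    exact hext _ hT hPB (hheart A hAheart)

variable {w}

lemma Bounded.le_induction (hb : w.Bounded) (hshift : ∀ X, P X → P (X⟦(1 : ℤ)⟧))
    {X : C} (hX : w.le X) : P X := by
  obtain ⟨n, -, hn, -⟩ := hb X
  exact w.le_induction hiso hext hheart hshift (-n).toNat hX (w.geN_mono (by omega) hn)

lemma Bounded.ge_induction (hb : w.Bounded) (hshift : ∀ X, P X → P (X⟦(-1 : ℤ)⟧))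
    {X : C} (hX : w.ge X) : P X := by
  obtain ⟨-, m, -, hm⟩ := hb X
  exact w.ge_induction hiso hext hheart hshift m.toNat hX (w.leN_mono (by omega) hm)

end Induction

end WeightStructure

/-- A triangulated functor between categories with bounded weight structures is w-exact
iff it maps the heart into the heart. -/
theorem stmt_6 {D : Type*} [Category D] [HasZeroObject D] [HasShift D ℤ]
    [Preadditive D] [∀ n : ℤ, (CategoryTheory.shiftFunctor D n).Additive]
    [Pretriangulated D] [HasBinaryBiproducts D]
    (wC : WeightStructure C) (wD : WeightStructure D) (hb : wC.Bounded)
    (F : C ⥤ D) [F.CommShift ℤ] [F.IsTriangulated] :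
    ((∀ X : C, wC.le X → wD.le (F.obj X)) ∧ (∀ X : C, wC.ge X → wD.ge (F.obj X))) ↔
      (∀ X : C, wC.heart X → wD.heart (F.obj X)) := by
  refine ⟨fun ⟨hle, hge⟩ X hX => ⟨hge X hX.1, hle X hX.2⟩,
    fun hH => ⟨fun X => ?_, fun X => ?_⟩⟩
  · exact hb.le_induction (P := fun X => wD.le (F.obj X))
      (fun e => wD.le_of_iso (F.mapIso e))
      (fun T hT => wD.le_of_distTriang (F.map_distinguished T hT))
      (fun X hX => (hH X hX).2)
      (fun X hX => wD.le_of_iso ((F.commShiftIso (1 : ℤ)).app X).symm (wD.le_shift _ hX))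
  · exact hb.ge_induction (P := fun X => wD.ge (F.obj X))
      (fun e => wD.ge_of_iso (F.mapIso e))
      (fun T hT => wD.ge_of_distTriang (F.map_distinguished T hT))
      (fun X hX => (hH X hX).1)
      (fun X hX => wD.ge_of_iso ((F.commShiftIso (-1 : ℤ)).app X).symm (wD.ge_shift _ hX))
end

section
/- Let 𝒞 be a monoidal additive category (a preadditive category with finite biproducts carrying a monoidal structure with bi-additive tensor product) such that the endomorphism ring End(𝟙) of the unit object is a field. If E is an invertible object of 𝒞 (there exists an object G with E ⊗ G ≅ 𝟙) and E ≅ 𝟙 ⊕ Y for some object Y, then Y is a zero object. -/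
open CategoryTheory Limits MonoidalCategory

/-- In a monoidal additive category whose unit has endomorphism ring a field, if an
invertible object `E` decomposes as `E ≅ 𝟙 ⊕ Y`, then `Y` is zero. -/
theorem stmt_13 {C : Type*} [Category C] [Preadditive C] [HasBinaryBiproducts C]
    [MonoidalCategory C] [MonoidalPreadditive C]
    (hfield : IsField (End (𝟙_ C)))
    (E Y : C) (hinv : ∃ G : C, Nonempty (E ⊗ G ≅ 𝟙_ C))
    (e : E ≅ (𝟙_ C) ⊞ Y) :
    IsZero Y := by
  obtain ⟨G, ⟨h⟩⟩ := hinv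
  -- distribute the tensor over the biproduct
  haveI : PreservesBinaryBiproduct (𝟙_ C) Y (tensorRight G) :=
    preservesBinaryBiproduct_of_preservesBiproduct _ _ _
  have d : ((𝟙_ C) ⊞ Y) ⊗ G ≅ ((𝟙_ C) ⊗ G) ⊞ (Y ⊗ G) := (tensorRight G).mapBiprod (𝟙_ C) Y
  have α : 𝟙_ C ≅ G ⊞ (Y ⊗ G) :=
    h.symm ≪≫ whiskerRightIso e G ≪≫ d ≪≫ biprod.mapIso (λ_ G) (Iso.refl _)
  set r₁ : 𝟙_ C ⟶ G := α.hom ≫ biprod.fst with hr₁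
  set i₁ : G ⟶ 𝟙_ C := biprod.inl ≫ α.inv with hi₁
  set r₂ : 𝟙_ C ⟶ Y ⊗ G := α.hom ≫ biprod.snd with hr₂
  set i₂ : (Y ⊗ G) ⟶ 𝟙_ C := biprod.inr ≫ α.inv with hi₂
  have hir₁ : i₁ ≫ r₁ = 𝟙 G := by simp [hi₁, hr₁]
  have hir₂ : i₂ ≫ r₂ = 𝟙 (Y ⊗ G) := by simp [hi₂, hr₂]
  have hsum : r₁ ≫ i₁ + r₂ ≫ i₂ = 𝟙 (𝟙_ C) := by
    rw [hr₁, hi₁, hr₂, hi₂]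
    simp only [Category.assoc]
    rw [← Preadditive.comp_add]
    rw [show biprod.fst ≫ biprod.inl ≫ α.inv + biprod.snd ≫ biprod.inr ≫ α.inv
        = (biprod.fst ≫ biprod.inl + biprod.snd ≫ biprod.inr) ≫ α.inv from by
        rw [Preadditive.add_comp]; simp only [Category.assoc]]
    rw [biprod.total]
    simp
  -- idempotents in the field End(𝟙) are 0 or 1
  have idem : ∀ x : End (𝟙_ C), x ≫ x = x → x = 0 ∨ x = 𝟙 (𝟙_ C) := by
    intro x hx
    by_cases h0 : x = 0
    · exact Or.inl h0
    · obtain ⟨y, hy⟩ := hfield.mul_inv_cancel h0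
      right
      have hxx : x * x = x := hx
      have hthis : x * (x * y) = x * y := by rw [← mul_assoc, hxx]
      rw [hy] at hthis
      simpa using hthis
  have he₁ : (r₁ ≫ i₁) ≫ (r₁ ≫ i₁) = r₁ ≫ i₁ := by
    calc (r₁ ≫ i₁) ≫ (r₁ ≫ i₁) = r₁ ≫ (i₁ ≫ r₁) ≫ i₁ := by simp only [Category.assoc]
      _ = r₁ ≫ i₁ := by rw [hir₁]; simp
  rcases idem _ he₁ with h0 | h1
  · -- G is zero, hence E ⊗ G ≅ 𝟙 is zero, hence everything is zero
    have hG : 𝟙 G = 0 := by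
      calc 𝟙 G = (i₁ ≫ r₁) ≫ (i₁ ≫ r₁) := by rw [hir₁]; simp
        _ = i₁ ≫ (r₁ ≫ i₁) ≫ r₁ := by simp only [Category.assoc]
        _ = 0 := by rw [h0]; simp
    have hEG : 𝟙 (E ⊗ G) = 0 := by
      have h' : 𝟙 (E ⊗ G) = E ◁ (𝟙 G) := by simp
      rw [h', hG, MonoidalPreadditive.whiskerLeft_zero]
    have hunit : 𝟙 (𝟙_ C) = 0 := by
      have h' : 𝟙 (𝟙_ C) = h.inv ≫ 𝟙 (E ⊗ G) ≫ h.hom := by simp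
      rw [h', hEG]; simp
    have hY1 : 𝟙 ((𝟙_ C) ⊗ Y) = 0 := by
      have h' : 𝟙 ((𝟙_ C) ⊗ Y) = (𝟙 (𝟙_ C)) ▷ Y := by simp
      rw [h', hunit, MonoidalPreadditive.zero_whiskerRight]
    have hz : IsZero ((𝟙_ C) ⊗ Y) := (IsZero.iff_id_eq_zero _).2 hY1
    exact hz.of_iso (λ_ Y).symm
  · -- r₁ ≫ i₁ = 𝟙, so G ≅ 𝟙 and Y ⊗ G is zero
    have hr₂i₂ : r₂ ≫ i₂ = 0 := by
      have h2 := hsum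
      rw [h1] at h2
      have h3 : 𝟙 (𝟙_ C) + r₂ ≫ i₂ = 𝟙 (𝟙_ C) + 0 := by rw [add_zero]; exact h2
      exact add_left_cancel h3
    have hYG : 𝟙 (Y ⊗ G) = 0 := by
      calc 𝟙 (Y ⊗ G) = (i₂ ≫ r₂) ≫ (i₂ ≫ r₂) := by rw [hir₂]; simp
        _ = i₂ ≫ (r₂ ≫ i₂) ≫ r₂ := by simp only [Category.assoc]
        _ = 0 := by rw [hr₂i₂]; simp
    have hz : IsZero (Y ⊗ G) := (IsZero.iff_id_eq_zero _).2 hYG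
    have gIso : 𝟙_ C ≅ G := ⟨r₁, i₁, h1, hir₁⟩
    exact hz.of_iso ((ρ_ Y).symm ≪≫ whiskerLeftIso Y gIso)
end
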